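/- arXiv:1705.10193 — 6 statements merged into one kernel-verified Lean document; each statement's English description precedes it below -/
import Mathlib

section
/- With the notation of the Uvarov modification (orthogonal polynomials $p_k$ with norms $h_k$ and kernels $K_n$ for a measure $d\mu$ on $[-1,1]$, and $q_k$ orthogonal for $d\mu + M\delta_1$ with the same leading coefficient), the value at $1$ satisfies $q_k(1) = \frac{p_k(1)}{1+M K_{k-1}(1,1)}$. -/
open Polynomial

theorem span_aux (p : ℕ → Polynomial ℝ) (hdeg : ∀ k, (p k).natDegree = k)
    (hne : ∀ k, p k ≠ 0) :
    ∀ k (s : Polynomial ℝ), s.degree < (k : ℕ) →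
      ∃ c : ℕ → ℝ, s = ∑ j ∈ Finset.range k, Polynomial.C (c j) * p j := by
  intro k
  induction k with
  | zero =>
    intro s hs
    refine ⟨0, ?_⟩
    simp only [Nat.cast_zero] at hs
    have : s = 0 := by
      by_contra h0
      have := (degree_eq_natDegree h0) ▸ hs
      exact absurd this (by simp)
    simp [this]
  | succ k ih =>
    intro s hs
    set a := s.coeff k / (p k).leadingCoeff with ha
    have hlc : (p k).leadingCoeff ≠ 0 := leadingCoeff_ne_zero.2 (hne k)
    have hcoeffk : (C a * p k).coeff k = s.coeff k := by
      rw [coeff_C_mul]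
      have : (p k).coeff k = (p k).leadingCoeff := by
        rw [leadingCoeff, hdeg]
      rw [this, ha, div_mul_cancel₀ _ hlc]
    have hdeg' : (s - C a * p k).degree < (k : ℕ) := by
      rw [degree_lt_iff_coeff_zero]
      intro m hm
      rw [coeff_sub]
      rcases eq_or_lt_of_le hm with h1 | h1
      · rw [← h1, hcoeffk, sub_self]
      · have h2 : s.coeff m = 0 := by
          apply coeff_eq_zero_of_degree_lt
          calc s.degree < ((k+1 : ℕ) : WithBot ℕ) := by exact_mod_cast hs
            _ ≤ (m : ℕ) := by exact_mod_cast Nat.succ_le_of_lt (by exact_mod_cast h1)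
        have h3 : (C a * p k).coeff m = 0 := by
          apply coeff_eq_zero_of_natDegree_lt
          calc (C a * p k).natDegree ≤ (p k).natDegree := natDegree_C_mul_le _ _
            _ = k := hdeg k
            _ < m := by exact_mod_cast h1
        rw [h2, h3, sub_zero]
    obtain ⟨c, hc⟩ := ih _ hdeg'
    refine ⟨fun j => if j = k then a else c j, ?_⟩
    rw [Finset.sum_range_succ]
    have : ∑ j ∈ Finset.range k, C (if j = k then a else c j) * p j
        = ∑ j ∈ Finset.range k, C (c j) * p j := by
      apply Finset.sum_congr rfl
      intro j hj
      rw [if_neg (Finset.mem_range.1 hj).ne]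
    rw [this]
    show s = _ + C (if k = k then a else c k) * p k
    rw [if_pos rfl, ← hc]
    ring

open MeasureTheory Polynomial

theorem uvarov_value_at_one
    (μ : Measure ℝ)
    (hsupp : μ (Set.Icc (-1 : ℝ) 1)ᶜ = 0)
    (hint : ∀ r : Polynomial ℝ, Integrable (fun t => r.eval t) μ)
    (p : ℕ → Polynomial ℝ)
    (hdeg : ∀ k, (p k).natDegree = k)
    (horth : ∀ j k, j ≠ k → ∫ t, (p j).eval t * (p k).eval t ∂μ = 0)
    (h : ℕ → ℝ)
    (hh : ∀ k, h k = ∫ t, ((p k).eval t) ^ 2 ∂μ)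
    (hpos : ∀ k, 0 < h k)
    (M : ℝ) (hM : 0 < M)
    (k : ℕ)
    (q : Polynomial ℝ)
    (hqdeg : q.natDegree = k)
    (hqlead : q.leadingCoeff = (p k).leadingCoeff)
    (hqorth : ∀ r : Polynomial ℝ, r.degree < (k : ℕ) →
      (∫ t, q.eval t * r.eval t ∂μ) + M * q.eval 1 * r.eval 1 = 0) :
    q.eval 1 = (p k).eval 1 /
      (1 + M * ∑ j ∈ Finset.range k, ((p j).eval 1) ^ 2 / h j) := by
  have hpne : ∀ j, p j ≠ 0 := by
    intro j hj
    have := hpos j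
    rw [hh j, hj] at this
    simp at this
  -- q - p k has degree < k
  have hsdeg : (q - p k).degree < (k : ℕ) := by
    rw [degree_lt_iff_coeff_zero]
    intro m hm
    rw [coeff_sub]
    rcases eq_or_lt_of_le hm with h1 | h1
    · have e1 : q.coeff m = q.leadingCoeff := by rw [← h1, leadingCoeff, hqdeg]
      have e2 : (p k).coeff m = (p k).leadingCoeff := by rw [← h1, leadingCoeff, hdeg]
      rw [e1, e2, hqlead, sub_self]
    · rw [coeff_eq_zero_of_natDegree_lt (by omega : q.natDegree < m),
        coeff_eq_zero_of_natDegree_lt (by rw [hdeg]; omega), sub_zero]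
  obtain ⟨c, hc⟩ := span_aux p hdeg hpne k (q - p k) hsdeg
  have hq_eq : q = p k + ∑ j ∈ Finset.range k, C (c j) * p j := by
    rw [← hc]; ring
  have hInt : ∀ a b : Polynomial ℝ, Integrable (fun t => a.eval t * b.eval t) μ := by
    intro a b
    simpa [Polynomial.eval_mul] using hint (a * b)
  -- key: for i < k, ∫ q p_i = c i * h i
  have key : ∀ i ∈ Finset.range k, (∫ t, q.eval t * (p i).eval t ∂μ) = c i * h i := by
    intro i hi
    have step1 : (∫ t, q.eval t * (p i).eval t ∂μ)
        = (∫ t, (p k).eval t * (p i).eval t ∂μ)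
          + ∑ j ∈ Finset.range k, c j * ∫ t, (p j).eval t * (p i).eval t ∂μ := by
      rw [show (fun t => q.eval t * (p i).eval t)
          = fun t => (p k).eval t * (p i).eval t
            + ∑ j ∈ Finset.range k, c j * ((p j).eval t * (p i).eval t) from by
        funext t
        rw [hq_eq]
        simp only [eval_add, eval_finset_sum, eval_mul, eval_C, add_mul, Finset.sum_mul]
        congr 1
        exact Finset.sum_congr rfl fun j _ => by ring]
      rw [integral_add (hInt _ _)]
      · congr 1
        rw [integral_finset_sum]
        · exact Finset.sum_congr rfl fun j _ => integral_const_mul _ _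
        · intro j _
          exact (hInt _ _).const_mul _
      · exact integrable_finset_sum _ fun j _ => (hInt _ _).const_mul _
    rw [step1, horth k i (by exact fun e => absurd (Finset.mem_range.1 hi) (by omega)), zero_add]
    rw [Finset.sum_eq_single i]
    · rw [hh i]
      congr 1
      apply integral_congr_ae
      filter_upwards with t
      ring
    · intro j _ hji
      rw [horth j i hji, mul_zero]
    · intro hni; exact absurd hi hni
  have hc_val : ∀ i ∈ Finset.range k, c i = -(M * q.eval 1 * (p i).eval 1) / h i := by
    intro i hi
    have hdlt : (p i).degree < (k : ℕ) := by
      calc (p i).degree ≤ ((p i).natDegree : WithBot ℕ) := degree_le_natDegree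
        _ < (k : ℕ) := by rw [hdeg]; exact_mod_cast Finset.mem_range.1 hi
    have := hqorth (p i) hdlt
    rw [key i hi] at this
    have hhi := (hpos i).ne'
    field_simp
    linarith
  -- evaluate at 1
  have heval : q.eval 1 = (p k).eval 1 + ∑ j ∈ Finset.range k, c j * (p j).eval 1 := by
    rw [hq_eq]
    simp [eval_finset_sum]
  have hsum : ∑ j ∈ Finset.range k, c j * (p j).eval 1
      = -(M * q.eval 1) * ∑ j ∈ Finset.range k, ((p j).eval 1) ^ 2 / h j := by
    rw [Finset.mul_sum]
    apply Finset.sum_congr rfl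
    intro j hj
    rw [hc_val j hj]
    ring
  set S := ∑ j ∈ Finset.range k, ((p j).eval 1) ^ 2 / h j with hS
  have hSnn : 0 ≤ S := Finset.sum_nonneg fun j _ =>
    div_nonneg (sq_nonneg _) (hpos j).le
  have hden : (0:ℝ) < 1 + M * S := by positivity
  rw [eq_div_iff hden.ne']
  rw [hsum] at heval
  linarith [heval, mul_comm (q.eval 1) (M * S)]
end

section
/- With the notation of the Uvarov modification, the squared norm of $q_k$ with respect to the modified inner product $(f,g)^M=\int f g\,d\mu + Mf(1)g(1)$ equals $\tilde h_k = h_k\, \frac{1+M K_k(1,1)}{1+M K_{k-1}(1,1)}$. -/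
open MeasureTheory Polynomial

theorem uvarov_norm
    (μ : Measure ℝ)
    (hsupp : μ (Set.Icc (-1 : ℝ) 1)ᶜ = 0)
    (hint : ∀ r : Polynomial ℝ, Integrable (fun t => r.eval t) μ)
    (p : ℕ → Polynomial ℝ)
    (hdeg : ∀ k, (p k).natDegree = k)
    (horth : ∀ j k, j ≠ k → ∫ t, (p j).eval t * (p k).eval t ∂μ = 0)
    (h : ℕ → ℝ)
    (hh : ∀ k, h k = ∫ t, ((p k).eval t) ^ 2 ∂μ)
    (hpos : ∀ k, 0 < h k)
    (M : ℝ) (hM : 0 < M)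
    (k : ℕ)
    (q : Polynomial ℝ)
    (hqdeg : q.natDegree = k)
    (hqlead : q.leadingCoeff = (p k).leadingCoeff)
    (hqorth : ∀ r : Polynomial ℝ, r.degree < (k : ℕ) →
      (∫ t, q.eval t * r.eval t ∂μ) + M * q.eval 1 * r.eval 1 = 0) :
    (∫ t, (q.eval t) ^ 2 ∂μ) + M * (q.eval 1) ^ 2 =
      h k * (1 + M * ∑ j ∈ Finset.range (k + 1), ((p j).eval 1) ^ 2 / h j) /
            (1 + M * ∑ j ∈ Finset.range k, ((p j).eval 1) ^ 2 / h j) := by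
  classical
  have hpne : ∀ n, p n ≠ 0 := by
    intro n h0
    have := hpos n
    rw [hh n] at this
    simp [h0] at this
  have hdegp : ∀ n, (p n).degree = (n : WithBot ℕ) := by
    intro n
    rw [Polynomial.degree_eq_natDegree (hpne n), hdeg n]
  have hinteg : ∀ f g : Polynomial ℝ, Integrable (fun t => f.eval t * g.eval t) μ := by
    intro f g
    simpa using hint (f * g)
  have hsq : ∀ f : Polynomial ℝ, (∫ t, (f.eval t) ^ 2 ∂μ) = ∫ t, f.eval t * f.eval t ∂μ := by
    intro f
    simp [sq]
  -- expansion lemma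
  have expand : ∀ n : ℕ, ∀ s : Polynomial ℝ, s.degree < (n : ℕ) →
      ∃ c : ℕ → ℝ, s = ∑ j ∈ Finset.range n, Polynomial.C (c j) * p j := by
    intro n
    induction n with
    | zero =>
      intro s hs
      refine ⟨fun _ => 0, ?_⟩
      have : s = 0 := by
        rw [← Polynomial.degree_eq_bot]
        exact Nat.WithBot.lt_zero_iff.mp (by exact_mod_cast hs)
      simp [this]
    | succ n ih =>
      intro s hs
      set c0 := s.coeff n / (p n).leadingCoeff with hc0
      have hlc : (p n).leadingCoeff ≠ 0 := Polynomial.leadingCoeff_ne_zero.mpr (hpne n)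
      have hcoeffn : (p n).coeff n = (p n).leadingCoeff := by
        rw [Polynomial.leadingCoeff, hdeg n]
      have hs' : (s - Polynomial.C c0 * p n).degree < (n : ℕ) := by
        rw [Polynomial.degree_lt_iff_coeff_zero]
        intro m hm
        rcases eq_or_lt_of_le hm with hm' | hm'
        · subst hm'
          simp [Polynomial.coeff_sub, Polynomial.coeff_C_mul, hcoeffn, hc0,
            div_mul_cancel₀ _ hlc]
        · have h1 : s.coeff m = 0 := by
            apply Polynomial.coeff_eq_zero_of_degree_lt
            exact lt_of_lt_of_le hs (by exact_mod_cast Nat.succ_le_of_lt hm')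
          have h2 : (p n).coeff m = 0 :=
            Polynomial.coeff_eq_zero_of_natDegree_lt (by rw [hdeg n]; exact hm')
          simp [Polynomial.coeff_sub, Polynomial.coeff_C_mul, h1, h2]
      obtain ⟨c, hc⟩ := ih _ hs'
      refine ⟨Function.update c n c0, ?_⟩
      rw [Finset.sum_range_succ, Function.update_self]
      have : ∑ j ∈ Finset.range n, Polynomial.C (Function.update c n c0 j) * p j
          = ∑ j ∈ Finset.range n, Polynomial.C (c j) * p j := by
        refine Finset.sum_congr rfl fun j hj => ?_
        rw [Function.update_of_ne (Finset.mem_range.mp hj).ne]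
      rw [this, ← hc]
      ring
  -- q = p k + lower order terms
  have hqne : q ≠ 0 := by
    intro h0
    apply Polynomial.leadingCoeff_ne_zero.mpr (hpne k)
    rw [← hqlead, h0, Polynomial.leadingCoeff_zero]
  have hrdeg : (q - p k).degree < (k : ℕ) := by
    rw [Polynomial.degree_lt_iff_coeff_zero]
    intro m hm
    rcases eq_or_lt_of_le hm with hm' | hm'
    · subst hm'
      have h1 : q.coeff k = q.leadingCoeff := by rw [Polynomial.leadingCoeff, hqdeg]
      have h2 : (p k).coeff k = (p k).leadingCoeff := by rw [Polynomial.leadingCoeff, hdeg k]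
      simp [Polynomial.coeff_sub, h1, h2, hqlead]
    · have h1 : q.coeff m = 0 := Polynomial.coeff_eq_zero_of_natDegree_lt (by rw [hqdeg]; exact hm')
      have h2 : (p k).coeff m = 0 :=
        Polynomial.coeff_eq_zero_of_natDegree_lt (by rw [hdeg k]; exact hm')
      simp [Polynomial.coeff_sub, h1, h2]
  obtain ⟨c, hc⟩ := expand k (q - p k) hrdeg
  have hq : q = p k + ∑ j ∈ Finset.range k, Polynomial.C (c j) * p j := by
    rw [← hc]; ring
  -- integral of q against p j
  have key : ∀ j : ℕ, (∫ t, q.eval t * (p j).eval t ∂μ)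
      = (∫ t, (p k).eval t * (p j).eval t ∂μ)
        + ∑ i ∈ Finset.range k, c i * ∫ t, (p i).eval t * (p j).eval t ∂μ := by
    intro j
    conv_lhs => rw [hq]
    have : (fun t => (p k + ∑ i ∈ Finset.range k, Polynomial.C (c i) * p i).eval t * (p j).eval t)
        = fun t => (p k).eval t * (p j).eval t
            + ∑ i ∈ Finset.range k, c i * ((p i).eval t * (p j).eval t) := by
      funext t
      simp [Polynomial.eval_finset_sum, Finset.sum_mul, add_mul, mul_assoc]
    rw [this]
    rw [integral_add (hinteg (p k) (p j))]
    · rw [integral_finset_sum]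
      · congr 1
        refine Finset.sum_congr rfl fun i _ => ?_
        exact integral_const_mul _ _
      · intro i _
        exact (hinteg (p i) (p j)).const_mul _
    · apply integrable_finset_sum
      intro i _
      exact (hinteg (p i) (p j)).const_mul _
  -- ∫ q p_k = h k
  have hqpk : (∫ t, q.eval t * (p k).eval t ∂μ) = h k := by
    rw [key k, hh k, hsq (p k)]
    have : ∑ i ∈ Finset.range k, c i * ∫ t, (p i).eval t * (p k).eval t ∂μ = 0 := by
      apply Finset.sum_eq_zero
      intro i hi
      rw [horth i k (Finset.mem_range.mp hi).ne, mul_zero]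
    rw [this, add_zero]
  -- coefficients
  have hcoef : ∀ j ∈ Finset.range k, c j * h j = -(M * q.eval 1 * (p j).eval 1) := by
    intro j hj
    have hjk := Finset.mem_range.mp hj
    have horthj := hqorth (p j) (by rw [hdegp j]; exact_mod_cast hjk)
    have hqj : (∫ t, q.eval t * (p j).eval t ∂μ) = c j * h j := by
      rw [key j, horth k j hjk.ne', zero_add]
      rw [Finset.sum_eq_single j]
      · rw [hh j, hsq (p j)]
      · intro i _ hij
        rw [horth i j hij, mul_zero]
      · intro hcon; exact absurd hj hcon
    rw [hqj] at horthj
    linarith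
  -- evaluate q at 1
  set S : ℝ := ∑ j ∈ Finset.range k, ((p j).eval 1) ^ 2 / h j with hS
  have hSnn : 0 ≤ S := by
    apply Finset.sum_nonneg
    intro j _
    have := hpos j
    positivity
  have hD : (0 : ℝ) < 1 + M * S := by nlinarith
  have hq1 : q.eval 1 * (1 + M * S) = (p k).eval 1 := by
    have he : q.eval 1 = (p k).eval 1 + ∑ j ∈ Finset.range k, c j * (p j).eval 1 := by
      conv_lhs => rw [hq]
      simp [Polynomial.eval_finset_sum]
    have hsum : ∑ j ∈ Finset.range k, c j * (p j).eval 1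
        = -(M * q.eval 1 * S) := by
      rw [hS, Finset.mul_sum, ← Finset.sum_neg_distrib]
      refine Finset.sum_congr rfl fun j hj => ?_
      have hhj := (hpos j).ne'
      field_simp
      linear_combination eval 1 (p j) * hcoef j hj
    rw [hsum] at he
    linarith [he]
  -- main computation: LHS = h k + M q(1) p_k(1)
  have hmain : (∫ t, (q.eval t) ^ 2 ∂μ) + M * (q.eval 1) ^ 2
      = h k + M * q.eval 1 * (p k).eval 1 := by
    have horthr := hqorth (q - p k) hrdeg
    have hsplit : (∫ t, q.eval t * (q - p k).eval t ∂μ)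
        = (∫ t, q.eval t * q.eval t ∂μ) - ∫ t, q.eval t * (p k).eval t ∂μ := by
      have : (fun t => q.eval t * (q - p k).eval t)
          = fun t => q.eval t * q.eval t - q.eval t * (p k).eval t := by
        funext t; simp [Polynomial.eval_sub]; ring
      rw [this, integral_sub (hinteg q q) (hinteg q (p k))]
    rw [hsplit, hqpk] at horthr
    rw [hsq q]
    simp only [Polynomial.eval_sub] at horthr
    nlinarith [horthr]
  rw [hmain, Finset.sum_range_succ, ← hS]
  rw [eq_div_iff hD.ne']
  have hhk := (hpos k).ne'
  field_simp
  linear_combination (M * eval 1 (p k)) * hq1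
end

section
/- With the notation of the Uvarov modification, the kernels of the modified family satisfy $\tilde K_k(t,u) = K_k(t,u) - \frac{M K_k(1,t) K_k(1,u)}{1+M K_k(1,1)}$, where $\tilde K_k(t,u)=\sum_{j=0}^k q_j(t)q_j(u)/\tilde h_j$. -/
/-!
For a sequence `p` orthogonal for a symmetric form `⟪·,·⟫` with norms `h`, the kernel
`K_n(·, w) = ∑_{i<n} (p_i(w) / h_i) p_i` is the unique polynomial of degree `< n` such that
`⟪r, K_n(·, w)⟫ = r(w)` for every `r` of degree `< n`. For the perturbed form
`⟪f, g⟫ + M f(a) g(a)` the polynomial `K_n(·, u) - c K_n(·, a)` has the same reproducing property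
exactly when `c (1 + M K_n(a, a)) = M K_n(a, u)`: the point mass contributes
`M r(a) (K_n(a, u) - c K_n(a, a))`, which has to cancel the `- c r(a)` coming from `⟪·,·⟫`.
Uniqueness identifies it with the kernel of the perturbed orthogonal sequence `q`. Nondegeneracy
of the norms of `q` comes from positive definiteness of `⟪·,·⟫`, which follows from expanding in
the basis `p`.
-/

open MeasureTheory Polynomial Finset

namespace Polynomial

variable {K : Type*} [Field K]

noncomputable def evalBilinForm (a : K) : LinearMap.BilinForm K K[X] :=
  (LinearMap.mul K K).compl₁₂ (leval a) (leval a)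

@[simp]
theorem evalBilinForm_apply (a : K) (f g : K[X]) :
    evalBilinForm a f g = f.eval a * g.eval a :=
  rfl

theorem isSymm_evalBilinForm (a : K) : (evalBilinForm a).IsSymm :=
  ⟨fun f g => by simp [mul_comm]⟩

namespace Sequence

theorem exists_eq_sum_smul (S : Sequence K) {n : ℕ} {r : K[X]} (hr : r ∈ degreeLT K n) :
    ∃ c : ℕ → K, r = ∑ i ∈ range n, c i • S i := by
  rw [← S.span_degreeLT fun i _ => (leadingCoeff_ne_zero.mpr (S.ne_zero i)).isUnit,
    ← coe_range, Submodule.mem_span_image_finset_iff_exists_fun'] at hr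
  obtain ⟨c, hc⟩ := hr
  exact ⟨c, hc.symm⟩

def IsOrthogonal (B : LinearMap.BilinForm K K[X]) (S : Sequence K) (h : ℕ → K) : Prop :=
  ∀ i j, B (S i) (S j) = if i = j then h i else 0

noncomputable def reproducingKernel (S : Sequence K) (h : ℕ → K) (n : ℕ) (w : K) : K[X] :=
  ∑ i ∈ range n, ((S i).eval w / h i) • S i

theorem eval_reproducingKernel (S : Sequence K) (h : ℕ → K) (n : ℕ) (w t : K) :
    (reproducingKernel S h n w).eval t = ∑ i ∈ range n, (S i).eval t * (S i).eval w / h i := by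
  simp only [reproducingKernel, eval_finsetSum, eval_smul, smul_eq_mul]
  exact sum_congr rfl fun i _ => by ring

theorem reproducingKernel_mem_degreeLT (S : Sequence K) (h : ℕ → K) (n : ℕ) (w : K) :
    reproducingKernel S h n w ∈ degreeLT K n :=
  Submodule.sum_mem _ fun i hi => Submodule.smul_mem _ _ <| mem_degreeLT.mpr <| by
    simpa using mem_range.mp hi

variable {B : LinearMap.BilinForm K K[X]} {S : Sequence K} {h : ℕ → K}

theorem IsOrthogonal.of_apply_degreeLT_eq_zero (hB : B.IsSymm)
    (hlow : ∀ k, ∀ r ∈ degreeLT K k, B (S k) r = 0) (hh : ∀ k, B (S k) (S k) = h k) :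
    IsOrthogonal B S h := by
  have hlt : ∀ {i j}, i < j → B (S j) (S i) = 0 := fun hij =>
    hlow _ _ (mem_degreeLT.mpr (by simpa using hij))
  intro i j
  rcases lt_trichotomy i j with hij | rfl | hij
  · rw [if_neg hij.ne, hB.eq, hlt hij]
  · rw [if_pos rfl, hh]
  · rw [if_neg hij.ne', hlt hij]

theorem IsOrthogonal.apply_sum_smul (hS : IsOrthogonal B S h) {n i : ℕ} (hi : i < n)
    (c : ℕ → K) : B (S i) (∑ j ∈ range n, c j • S j) = c i * h i := by
  simp [map_sum, hS i, mem_range.mpr hi, mul_comm]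

theorem IsOrthogonal.eq_sum_smul (hS : IsOrthogonal B S h) (hh : ∀ i, h i ≠ 0) {n : ℕ}
    {r : K[X]} (hr : r ∈ degreeLT K n) : r = ∑ i ∈ range n, (B (S i) r / h i) • S i := by
  obtain ⟨c, rfl⟩ := S.exists_eq_sum_smul hr
  refine sum_congr rfl fun i hi => ?_
  rw [hS.apply_sum_smul (mem_range.mp hi), mul_div_cancel_right₀ _ (hh i)]

theorem IsOrthogonal.apply_reproducingKernel (hS : IsOrthogonal B S h) (hB : B.IsSymm)
    (hh : ∀ i, h i ≠ 0) {n : ℕ} {r : K[X]} (hr : r ∈ degreeLT K n) (w : K) :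
    B r (reproducingKernel S h n w) = r.eval w := by
  conv_rhs => rw [hS.eq_sum_smul hh hr]
  rw [hB.eq]
  simp only [reproducingKernel, map_sum, map_smul, LinearMap.sum_apply,
    LinearMap.smul_apply, eval_finsetSum, eval_smul, smul_eq_mul]
  exact sum_congr rfl fun i _ => by ring

theorem IsOrthogonal.eq_reproducingKernel (hS : IsOrthogonal B S h) (hh : ∀ i, h i ≠ 0)
    {n : ℕ} {R : K[X]} (hR : R ∈ degreeLT K n) {w : K}
    (hrep : ∀ r ∈ degreeLT K n, B r R = r.eval w) : R = reproducingKernel S h n w := by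
  rw [hS.eq_sum_smul hh hR]
  refine sum_congr rfl fun i hi => ?_
  rw [hrep _ (mem_degreeLT.mpr (by simpa using mem_range.mp hi))]

theorem IsOrthogonal.reproducingKernel_add_smul_evalBilinForm (hS : IsOrthogonal B S h)
    (hB : B.IsSymm) (hh : ∀ i, h i ≠ 0) {T : Sequence K} {th : ℕ → K} {M a : K}
    (hT : IsOrthogonal (B + M • evalBilinForm a) T th) (hth : ∀ i, th i ≠ 0) {n : ℕ}
    (hD : 1 + M * (reproducingKernel S h n a).eval a ≠ 0) (u : K) :
    reproducingKernel T th n u = reproducingKernel S h n u -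
      (M * (reproducingKernel S h n u).eval a / (1 + M * (reproducingKernel S h n a).eval a)) •
        reproducingKernel S h n a := by
  set c := M * (reproducingKernel S h n u).eval a / (1 + M * (reproducingKernel S h n a).eval a)
  have hc : c * (1 + M * (reproducingKernel S h n a).eval a) =
      M * (reproducingKernel S h n u).eval a := div_mul_cancel₀ _ hD
  refine (hT.eq_reproducingKernel hth
    (Submodule.sub_mem _ (reproducingKernel_mem_degreeLT S h n u)
      (Submodule.smul_mem _ _ (reproducingKernel_mem_degreeLT S h n a))) fun r hr => ?_).symm
  simp only [LinearMap.add_apply, LinearMap.smul_apply, evalBilinForm_apply, map_sub, map_smul,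
    hS.apply_reproducingKernel hB hh hr, smul_eq_mul]
  linear_combination (-r.eval a) * hc

theorem IsOrthogonal.apply_self_pos [LinearOrder K] [IsStrictOrderedRing K]
    (hS : IsOrthogonal B S h) (hh : ∀ i, 0 < h i) {r : K[X]} (hr : r ≠ 0) : 0 < B r r := by
  have hmem : r ∈ degreeLT K (r.natDegree + 1) := mem_degreeLT.mpr <|
    degree_le_natDegree.trans_lt <| by exact_mod_cast r.natDegree.lt_succ_self
  have hexp := hS.eq_sum_smul (fun i => (hh i).ne') hmem
  have hsq : B r r = ∑ i ∈ range (r.natDegree + 1), B (S i) r ^ 2 / h i := by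
    nth_rewrite 1 [hexp]
    simp only [map_sum, map_smul, LinearMap.sum_apply, LinearMap.smul_apply, smul_eq_mul]
    exact sum_congr rfl fun i _ => by ring
  obtain ⟨i, hi, hBi⟩ : ∃ i ∈ range (r.natDegree + 1), B (S i) r ≠ 0 := by
    by_contra! h0
    exact hr (hexp.trans (sum_eq_zero fun i hi => by simp [h0 i hi]))
  rw [hsq]
  exact sum_pos' (fun j _ => div_nonneg (sq_nonneg _) (hh j).le)
    ⟨i, hi, div_pos (sq_pos_of_ne_zero hBi) (hh i)⟩

end Sequence

end Polynomial

noncomputable def integralBilinForm (μ : Measure ℝ)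
    (hint : ∀ r : ℝ[X], Integrable (fun t => r.eval t) μ) : LinearMap.BilinForm ℝ ℝ[X] :=
  LinearMap.mk₂ ℝ (fun f g => ∫ x, f.eval x * g.eval x ∂μ)
    (fun f₁ f₂ g => by
      simp only [eval_add, add_mul]
      exact integral_add (by simpa using hint (f₁ * g)) (by simpa using hint (f₂ * g)))
    (fun c f g => by
      simp only [eval_smul, smul_eq_mul, mul_assoc]
      exact integral_const_mul c _)
    (fun f g₁ g₂ => by
      simp only [eval_add, mul_add]
      exact integral_add (by simpa using hint (f * g₁)) (by simpa using hint (f * g₂)))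
    (fun c f g => by
      simp only [eval_smul, smul_eq_mul, mul_left_comm _ c]
      exact integral_const_mul c _)

@[simp]
theorem integralBilinForm_apply (μ : Measure ℝ)
    (hint : ∀ r : ℝ[X], Integrable (fun t => r.eval t) μ) (f g : ℝ[X]) :
    integralBilinForm μ hint f g = ∫ x, f.eval x * g.eval x ∂μ :=
  rfl

theorem isSymm_integralBilinForm (μ : Measure ℝ)
    (hint : ∀ r : ℝ[X], Integrable (fun t => r.eval t) μ) : (integralBilinForm μ hint).IsSymm :=
  ⟨fun f g => by simp [mul_comm]⟩

theorem uvarov_kernels_general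
    (μ : Measure ℝ)
    (hint : ∀ r : Polynomial ℝ, Integrable (fun t => r.eval t) μ)
    (p : ℕ → Polynomial ℝ)
    (hdeg : ∀ k, (p k).natDegree = k)
    (horth : ∀ j k, j ≠ k → ∫ t, (p j).eval t * (p k).eval t ∂μ = 0)
    (h : ℕ → ℝ)
    (hh : ∀ k, h k = ∫ t, ((p k).eval t) ^ 2 ∂μ)
    (hpos : ∀ k, 0 < h k)
    (M : ℝ) (hM : 0 < M)
    (q : ℕ → Polynomial ℝ)
    (hqdeg : ∀ k, (q k).natDegree = k)
    (hqlead : ∀ k, (q k).leadingCoeff = (p k).leadingCoeff)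
    (hqorth : ∀ k, ∀ r : Polynomial ℝ, r.degree < (k : ℕ) →
      (∫ t, (q k).eval t * r.eval t ∂μ) + M * (q k).eval 1 * r.eval 1 = 0)
    (th : ℕ → ℝ)
    (hth : ∀ k, th k = (∫ t, ((q k).eval t) ^ 2 ∂μ) + M * ((q k).eval 1) ^ 2)
    (k : ℕ) :
    ∀ t u : ℝ,
      ∑ j ∈ Finset.range (k + 1), (q j).eval t * (q j).eval u / th j =
        (∑ j ∈ Finset.range (k + 1), (p j).eval t * (p j).eval u / h j) -
          M * (∑ j ∈ Finset.range (k + 1), (p j).eval 1 * (p j).eval t / h j) *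
              (∑ j ∈ Finset.range (k + 1), (p j).eval 1 * (p j).eval u / h j) /
            (1 + M * ∑ j ∈ Finset.range (k + 1), ((p j).eval 1) ^ 2 / h j) := by
  intro t u
  have hp0 (i : ℕ) : p i ≠ 0 := fun hp => (hpos i).ne' (by simp [hh, hp])
  have hq0 (i : ℕ) : q i ≠ 0 :=
    leadingCoeff_ne_zero.mp (hqlead i ▸ leadingCoeff_ne_zero.mpr (hp0 i))
  let S : Sequence ℝ := ⟨p, fun i => (degree_eq_iff_natDegree_eq (hp0 i)).mpr (hdeg i)⟩
  let T : Sequence ℝ := ⟨q, fun i => (degree_eq_iff_natDegree_eq (hq0 i)).mpr (hqdeg i)⟩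
  set B := integralBilinForm μ hint
  have hS : Sequence.IsOrthogonal B S h := fun i j => by
    split_ifs with hij
    · simp [S, B, hij, hh, sq]
    · exact horth i j hij
  have hT : Sequence.IsOrthogonal (B + M • evalBilinForm 1) T th :=
    .of_apply_degreeLT_eq_zero ((isSymm_integralBilinForm μ hint).add
      ((isSymm_evalBilinForm 1).smul M))
      (fun k r hr => by simpa [B, T, mul_assoc] using hqorth k r (mem_degreeLT.mp hr))
      (fun k => by simp [B, T, hth, sq])
  have hthpos (i : ℕ) : 0 < th i := by
    have hq2 : 0 < ∫ x, (q i).eval x ^ 2 ∂μ := by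
      simpa [B, T, sq] using hS.apply_self_pos hpos (hq0 i)
    rw [hth]
    positivity
  have hK11 : 0 ≤ (Sequence.reproducingKernel S h (k + 1) 1).eval 1 := by
    rw [Sequence.eval_reproducingKernel]
    exact sum_nonneg fun j _ => div_nonneg (mul_self_nonneg _) (hpos j).le
  have hkernel := congrArg (eval t) <| hS.reproducingKernel_add_smul_evalBilinForm
    (isSymm_integralBilinForm μ hint) (fun i => (hpos i).ne') hT (fun i => (hthpos i).ne')
    (by positivity) u
  simp only [eval_sub, eval_smul, smul_eq_mul, Sequence.eval_reproducingKernel] at hkernel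
  rw [hkernel]
  have hK1t : ∑ j ∈ range (k + 1), (p j).eval t * (p j).eval 1 / h j =
      ∑ j ∈ range (k + 1), (p j).eval 1 * (p j).eval t / h j :=
    sum_congr rfl fun j _ => by rw [mul_comm]
  simp only [S, hK1t, sq]
  ring

theorem uvarov_kernels
    (μ : Measure ℝ)
    (hsupp : μ (Set.Icc (-1 : ℝ) 1)ᶜ = 0)
    (hint : ∀ r : Polynomial ℝ, Integrable (fun t => r.eval t) μ)
    (p : ℕ → Polynomial ℝ)
    (hdeg : ∀ k, (p k).natDegree = k)
    (horth : ∀ j k, j ≠ k → ∫ t, (p j).eval t * (p k).eval t ∂μ = 0)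
    (h : ℕ → ℝ)
    (hh : ∀ k, h k = ∫ t, ((p k).eval t) ^ 2 ∂μ)
    (hpos : ∀ k, 0 < h k)
    (M : ℝ) (hM : 0 < M)
    (q : ℕ → Polynomial ℝ)
    (hqdeg : ∀ k, (q k).natDegree = k)
    (hqlead : ∀ k, (q k).leadingCoeff = (p k).leadingCoeff)
    (hqorth : ∀ k, ∀ r : Polynomial ℝ, r.degree < (k : ℕ) →
      (∫ t, (q k).eval t * r.eval t ∂μ) + M * (q k).eval 1 * r.eval 1 = 0)
    (th : ℕ → ℝ)
    (hth : ∀ k, th k = (∫ t, ((q k).eval t) ^ 2 ∂μ) + M * ((q k).eval 1) ^ 2)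
    (k : ℕ) :
    ∀ t u : ℝ,
      ∑ j ∈ Finset.range (k + 1), (q j).eval t * (q j).eval u / th j =
        (∑ j ∈ Finset.range (k + 1), (p j).eval t * (p j).eval u / h j) -
          M * (∑ j ∈ Finset.range (k + 1), (p j).eval 1 * (p j).eval t / h j) *
              (∑ j ∈ Finset.range (k + 1), (p j).eval 1 * (p j).eval u / h j) /
            (1 + M * ∑ j ∈ Finset.range (k + 1), ((p j).eval 1) ^ 2 / h j) :=
  uvarov_kernels_general μ hint p hdeg horth h hh hpos M hM q hqdeg hqlead hqorth th hth k
end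

section
/- Let $(p_k)$ and $(q_k)$ be the orthogonal polynomials (with equal leading coefficients) for $d\mu$ and $d\mu+M\delta_1$ respectively, with norms $h_k$, $\tilde h_k$ and kernels $K_n$, $\tilde K_n$. Then for each $k\ge 0$ and all $t,u$: $\frac{q_k(t)q_k(u)}{\tilde h_k} = \frac{p_k(t)p_k(u)}{h_k} - \frac{M K_k(1,t)K_k(1,u)}{1+MK_k(1,1)} + \frac{M K_{k-1}(1,t)K_{k-1}(1,u)}{1+MK_{k-1}(1,1)}$. -/
open MeasureTheory Polynomial

lemma exists_coeffs (p : ℕ → Polynomial ℝ) (hdeg : ∀ k, (p k).natDegree = k)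
    (hlead : ∀ k, (p k).leadingCoeff ≠ 0) :
    ∀ n (r : Polynomial ℝ), r.degree < (n : ℕ) →
      ∃ c : ℕ → ℝ, r = ∑ j ∈ Finset.range n, Polynomial.C (c j) * p j := by
  intro n
  induction n with
  | zero =>
    intro r hr
    refine ⟨fun _ => 0, ?_⟩
    simp only [Finset.range_zero, Finset.sum_empty]
    have : r.degree = ⊥ := by
      exact Nat.WithBot.lt_zero_iff.mp (by exact_mod_cast hr)
    exact Polynomial.degree_eq_bot.mp this
  | succ n ih =>
    intro r hr
    set a : ℝ := r.coeff n / (p n).coeff n with ha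
    have hpn : (p n).coeff n = (p n).leadingCoeff := by
      rw [Polynomial.leadingCoeff, hdeg n]
    have hr' : (r - Polynomial.C a * p n).degree < (n : ℕ) := by
      rw [Polynomial.degree_lt_iff_coeff_zero]
      intro m hm
      rcases eq_or_lt_of_le hm with hmn | hmn
      · simp only [Polynomial.coeff_sub, Polynomial.coeff_C_mul]
        rw [← hmn, ha, hpn, div_mul_cancel₀ _ (hlead n)]
        ring
      · have h1 : r.coeff m = 0 := by
          apply Polynomial.coeff_eq_zero_of_degree_lt
          exact lt_of_lt_of_le hr (by exact_mod_cast hmn)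
        have h2 : (p n).coeff m = 0 := by
          apply Polynomial.coeff_eq_zero_of_natDegree_lt
          rw [hdeg n]; exact_mod_cast hmn
        simp [h1, h2]
    obtain ⟨c, hc⟩ := ih (r - Polynomial.C a * p n) hr'
    refine ⟨fun j => if j = n then a else c j, ?_⟩
    rw [Finset.sum_range_succ]
    simp only []
    simp only [if_true]
    have : ∑ j ∈ Finset.range n, Polynomial.C (if j = n then a else c j) * p j
        = ∑ j ∈ Finset.range n, Polynomial.C (c j) * p j := by
      apply Finset.sum_congr rfl
      intro j hj
      rw [if_neg (Finset.mem_range.mp hj).ne]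
    rw [this, ← hc]
    ring

lemma key_alg (M Q1 hk S1 St Su Pt Pu : ℝ)
    (hk0 : hk ≠ 0) (hD0 : 1 + M * S1 ≠ 0)
    (hT0 : hk + M * Q1 ^ 2 * (1 + M * S1) ≠ 0) :
    (Pt - M * Q1 * St) * (Pu - M * Q1 * Su) / (hk + M * Q1 ^ 2 * (1 + M * S1)) =
      Pt * Pu / hk -
        M * (St + Q1 * (1 + M * S1) * Pt / hk) * (Su + Q1 * (1 + M * S1) * Pu / hk) /
          (1 + M * (S1 + (Q1 * (1 + M * S1)) ^ 2 / hk)) +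
        M * St * Su / (1 + M * S1) := by
  have hE' : 1 + M * (S1 + (Q1 * (1 + M * S1)) ^ 2 / hk) =
      (1 + M * S1) * (hk + M * Q1 ^ 2 * (1 + M * S1)) / hk := by
    field_simp
    ring
  rw [hE']
  rw [div_div_eq_mul_div]
  field_simp
  ring

theorem uvarov_kernel_telescoping
    (μ : Measure ℝ)
    (hsupp : μ (Set.Icc (-1 : ℝ) 1)ᶜ = 0)
    (hint : ∀ r : Polynomial ℝ, Integrable (fun t => r.eval t) μ)
    (p : ℕ → Polynomial ℝ)
    (hdeg : ∀ k, (p k).natDegree = k)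
    (horth : ∀ j k, j ≠ k → ∫ t, (p j).eval t * (p k).eval t ∂μ = 0)
    (h : ℕ → ℝ)
    (hh : ∀ k, h k = ∫ t, ((p k).eval t) ^ 2 ∂μ)
    (hpos : ∀ k, 0 < h k)
    (M : ℝ) (hM : 0 < M)
    (q : ℕ → Polynomial ℝ)
    (hqdeg : ∀ k, (q k).natDegree = k)
    (hqlead : ∀ k, (q k).leadingCoeff = (p k).leadingCoeff)
    (hqorth : ∀ k, ∀ r : Polynomial ℝ, r.degree < (k : ℕ) →
      (∫ t, (q k).eval t * r.eval t ∂μ) + M * (q k).eval 1 * r.eval 1 = 0)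
    (th : ℕ → ℝ)
    (hth : ∀ k, th k = (∫ t, ((q k).eval t) ^ 2 ∂μ) + M * ((q k).eval 1) ^ 2)
    (k : ℕ) :
    ∀ t u : ℝ,
      (q k).eval t * (q k).eval u / th k =
        (p k).eval t * (p k).eval u / h k -
          M * (∑ j ∈ Finset.range (k + 1), (p j).eval 1 * (p j).eval t / h j) *
              (∑ j ∈ Finset.range (k + 1), (p j).eval 1 * (p j).eval u / h j) /
            (1 + M * ∑ j ∈ Finset.range (k + 1), ((p j).eval 1) ^ 2 / h j) +
          M * (∑ j ∈ Finset.range k, (p j).eval 1 * (p j).eval t / h j) *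
              (∑ j ∈ Finset.range k, (p j).eval 1 * (p j).eval u / h j) /
            (1 + M * ∑ j ∈ Finset.range k, ((p j).eval 1) ^ 2 / h j) := by
  -- basic nonvanishing facts
  have hpne : ∀ j, p j ≠ 0 := by
    intro j hj
    have := hpos j
    rw [hh j, hj] at this
    simp at this
  have hlead : ∀ j, (p j).leadingCoeff ≠ 0 := fun j =>
    Polynomial.leadingCoeff_ne_zero.mpr (hpne j)
  have hqne : q k ≠ 0 := by
    intro h0
    exact hlead k (by rw [← hqlead k, h0, Polynomial.leadingCoeff_zero])
  -- integrability of products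
  have hint2 : ∀ r s : Polynomial ℝ,
      Integrable (fun t => r.eval t * s.eval t) μ := by
    intro r s
    simpa [Polynomial.eval_mul] using hint (r * s)
  -- self inner products
  have hself : ∀ i, ∫ t, (p i).eval t * (p i).eval t ∂μ = h i := by
    intro i
    rw [hh i]
    congr 1
    funext t
    ring
  -- the kernel polynomial
  set B : Polynomial ℝ :=
    ∑ i ∈ Finset.range k, Polynomial.C ((p i).eval 1 / h i) * p i with hBdef
  have hBeval : ∀ x : ℝ, B.eval x =
      ∑ i ∈ Finset.range k, (p i).eval 1 / h i * (p i).eval x := by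
    intro x
    rw [hBdef, Polynomial.eval_finset_sum]
    simp
  have hBeval' : ∀ x : ℝ, B.eval x =
      ∑ i ∈ Finset.range k, (p i).eval 1 * (p i).eval x / h i := by
    intro x
    rw [hBeval x]
    apply Finset.sum_congr rfl
    intro i _
    ring
  have hdegB : B.degree < (k : ℕ) := by
    apply lt_of_le_of_lt (Polynomial.degree_sum_le _ _)
    rw [Finset.sup_lt_iff (by exact WithBot.bot_lt_coe k)]
    intro i hi
    calc (Polynomial.C ((p i).eval 1 / h i) * p i).degree
        ≤ (p i).degree := by
          rw [← Polynomial.smul_eq_C_mul]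
          exact Polynomial.degree_smul_le _ _
      _ ≤ ((p i).natDegree : WithBot ℕ) := Polynomial.degree_le_natDegree
      _ < (k : ℕ) := by
          rw [hdeg i]
          exact_mod_cast Finset.mem_range.mp hi
  -- integrals of B against p j
  have hIB : ∀ j : ℕ, ∫ t, B.eval t * (p j).eval t ∂μ =
      ∑ i ∈ Finset.range k, (p i).eval 1 / h i *
        ∫ t, (p i).eval t * (p j).eval t ∂μ := by
    intro j
    have : (fun t => B.eval t * (p j).eval t) =
        fun t => ∑ i ∈ Finset.range k,
          (p i).eval 1 / h i * ((p i).eval t * (p j).eval t) := by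
      funext t
      rw [hBeval t, Finset.sum_mul]
      apply Finset.sum_congr rfl
      intro i _
      ring
    rw [this, integral_finset_sum]
    · apply Finset.sum_congr rfl
      intro i _
      exact integral_const_mul _ _
    · intro i _
      exact (hint2 (p i) (p j)).const_mul _
  have hIBlt : ∀ j, j < k → ∫ t, B.eval t * (p j).eval t ∂μ = (p j).eval 1 := by
    intro j hj
    rw [hIB j]
    rw [Finset.sum_eq_single j]
    · rw [hself j, div_mul_cancel₀ _ (hpos j).ne']
    · intro i _ hij
      rw [horth i j hij, mul_zero]
    · intro hjk
      exact absurd (Finset.mem_range.mpr hj) hjk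
  have hIBk : ∫ t, B.eval t * (p k).eval t ∂μ = 0 := by
    rw [hIB k]
    apply Finset.sum_eq_zero
    intro i hi
    rw [horth i k (Finset.mem_range.mp hi).ne, mul_zero]
  -- Claim 1 : q k = p k - C (M * qk(1)) * B
  have hdegq : (q k).degree = (k : ℕ) := by
    rw [Polynomial.degree_eq_natDegree hqne, hqdeg k]
  have hdegp : (p k).degree = (k : ℕ) := by
    rw [Polynomial.degree_eq_natDegree (hpne k), hdeg k]
  have hsub : (q k - p k).degree < (k : ℕ) := by
    have := Polynomial.degree_sub_lt (by rw [hdegq, hdegp]) hqne (hqlead k)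
    rwa [hdegq] at this
  set d : Polynomial ℝ :=
    q k - (p k - Polynomial.C (M * (q k).eval 1) * B) with hddef
  have hdd : d = (q k - p k) + Polynomial.C (M * (q k).eval 1) * B := by
    rw [hddef]; ring
  have hdegd : d.degree < (k : ℕ) := by
    rw [hdd]
    apply lt_of_le_of_lt (Polynomial.degree_add_le _ _)
    apply max_lt hsub
    apply lt_of_le_of_lt _ hdegB
    rw [← Polynomial.smul_eq_C_mul]
    exact Polynomial.degree_smul_le _ _
  have hdeval : ∀ x : ℝ, d.eval x =
      (q k).eval x - (p k).eval x + (M * (q k).eval 1) * B.eval x := by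
    intro x
    rw [hdd]
    simp [Polynomial.eval_add, Polynomial.eval_sub, Polynomial.eval_mul]
  have hdortho : ∀ j, j < k → ∫ t, d.eval t * (p j).eval t ∂μ = 0 := by
    intro j hj
    have hfun : (fun t => d.eval t * (p j).eval t) =
        fun t => ((q k).eval t * (p j).eval t - (p k).eval t * (p j).eval t)
          + (M * (q k).eval 1) * (B.eval t * (p j).eval t) := by
      funext t
      rw [hdeval t]
      ring
    have hA : Integrable (fun t =>
        (q k).eval t * (p j).eval t - (p k).eval t * (p j).eval t) μ :=
      (hint2 (q k) (p j)).sub (hint2 (p k) (p j))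
    have hB2 : Integrable (fun t =>
        (M * (q k).eval 1) * (B.eval t * (p j).eval t)) μ :=
      (hint2 B (p j)).const_mul _
    rw [hfun, integral_add hA hB2,
      integral_sub (hint2 (q k) (p j)) (hint2 (p k) (p j)),
      integral_const_mul]
    have h1 : (∫ t, (q k).eval t * (p j).eval t ∂μ) =
        -(M * (q k).eval 1 * (p j).eval 1) := by
      have hdegpj : (p j).degree < (k : ℕ) := by
        apply lt_of_le_of_lt Polynomial.degree_le_natDegree
        rw [hdeg j]
        exact_mod_cast hj
      have := hqorth k (p j) hdegpj
      linarith
    rw [h1, horth k j hj.ne', hIBlt j hj]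
    ring
  -- d = 0
  have hd0 : d = 0 := by
    obtain ⟨cc, hcc⟩ := exists_coeffs p hdeg hlead k d hdegd
    have hcc0 : ∀ i ∈ Finset.range k, Polynomial.C (cc i) * p i = 0 := by
      intro i hi
      have hik := Finset.mem_range.mp hi
      have h1 : ∫ t, d.eval t * (p i).eval t ∂μ = cc i * h i := by
        have hfun : (fun t => d.eval t * (p i).eval t) =
            fun t => ∑ j ∈ Finset.range k,
              cc j * ((p j).eval t * (p i).eval t) := by
          funext t
          rw [hcc, Polynomial.eval_finset_sum, Finset.sum_mul]
          apply Finset.sum_congr rfl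
          intro j _
          simp [Polynomial.eval_mul]
          ring
        rw [hfun, integral_finset_sum _
          (fun j _ => (hint2 (p j) (p i)).const_mul _)]
        rw [Finset.sum_eq_single i]
        · rw [integral_const_mul, hself i]
        · intro j _ hji
          rw [integral_const_mul, horth j i hji, mul_zero]
        · intro hik'
          exact absurd (Finset.mem_range.mpr hik) hik'
      have h2 := hdortho i hik
      rw [h1] at h2
      have : cc i = 0 := by
        rcases mul_eq_zero.mp h2 with h3 | h3
        · exact h3
        · exact absurd h3 (hpos i).ne'
      rw [this]
      simp
    rw [hcc]
    exact Finset.sum_eq_zero hcc0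
  have hqe : ∀ x : ℝ, (q k).eval x =
      (p k).eval x - M * (q k).eval 1 * B.eval x := by
    intro x
    have hq_eq : q k = p k - Polynomial.C (M * (q k).eval 1) * B := by
      have h0 := hd0
      rw [hddef] at h0
      exact sub_eq_zero.mp h0
    conv_lhs => rw [hq_eq]
    simp [Polynomial.eval_sub, Polynomial.eval_mul]
  -- value of B at 1
  have hB1 : B.eval 1 = ∑ j ∈ Finset.range k, ((p j).eval 1) ^ 2 / h j := by
    rw [hBeval' 1]
    apply Finset.sum_congr rfl
    intro j _
    rw [sq]
  have hS1 : 0 ≤ ∑ j ∈ Finset.range k, ((p j).eval 1) ^ 2 / h j :=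
    Finset.sum_nonneg fun j _ => div_nonneg (sq_nonneg _) (hpos j).le
  have hDpos : 0 < 1 + M * ∑ j ∈ Finset.range k, ((p j).eval 1) ^ 2 / h j := by
    have := mul_nonneg hM.le hS1
    linarith
  have hq1 : (q k).eval 1 *
      (1 + M * ∑ j ∈ Finset.range k, ((p j).eval 1) ^ 2 / h j) = (p k).eval 1 := by
    have h' := hqe 1
    rw [hB1] at h'
    linear_combination h'
  have hIqB : ∫ t, (q k).eval t * B.eval t ∂μ =
      -(M * (q k).eval 1 * ∑ j ∈ Finset.range k, ((p j).eval 1) ^ 2 / h j) := by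
    have h' := hqorth k B hdegB
    rw [hB1] at h'
    linarith
  have hIqp : ∫ t, (q k).eval t * (p k).eval t ∂μ = h k := by
    have hfun : (fun t => (q k).eval t * (p k).eval t) = fun t =>
        (p k).eval t * (p k).eval t -
          (M * (q k).eval 1) * (B.eval t * (p k).eval t) := by
      funext t
      rw [hqe t]
      ring
    rw [hfun, integral_sub (hint2 (p k) (p k)) ((hint2 B (p k)).const_mul _),
      integral_const_mul, hself k, hIBk]
    ring
  have hIqq : ∫ t, ((q k).eval t) ^ 2 ∂μ =
      h k + M * (q k).eval 1 *
        (M * (q k).eval 1 * ∑ j ∈ Finset.range k, ((p j).eval 1) ^ 2 / h j) := by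
    have hfun : (fun t => ((q k).eval t) ^ 2) = fun t =>
        (q k).eval t * (p k).eval t -
          (M * (q k).eval 1) * ((q k).eval t * B.eval t) := by
      funext t
      rw [sq, hqe t]
      ring
    rw [hfun, integral_sub (hint2 (q k) (p k)) ((hint2 (q k) B).const_mul _),
      integral_const_mul, hIqp, hIqB]
    ring
  have hthk : th k = h k + M * ((q k).eval 1) ^ 2 *
      (1 + M * ∑ j ∈ Finset.range k, ((p j).eval 1) ^ 2 / h j) := by
    rw [hth k, hIqq]
    ring
  have hT : 0 < h k + M * ((q k).eval 1) ^ 2 *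
      (1 + M * ∑ j ∈ Finset.range k, ((p j).eval 1) ^ 2 / h j) := by
    have h1 : 0 ≤ M * ((q k).eval 1) ^ 2 *
        (1 + M * ∑ j ∈ Finset.range k, ((p j).eval 1) ^ 2 / h j) :=
      mul_nonneg (mul_nonneg hM.le (sq_nonneg _)) hDpos.le
    linarith [hpos k]
  intro t u
  simp only [Finset.sum_range_succ]
  rw [hqe t, hqe u, hthk, hBeval' t, hBeval' u, ← hq1]
  exact key_alg _ _ _ _ _ _ _ _ (hpos k).ne' hDpos.ne' hT.ne'
end

section
/- For every real number $a$ there exists a constant $C_a>1$ such that for all real $x$ with $\min(x, x+a)\ge 1$, one has $C_a^{-1} x^a \le \frac{\Gamma(x+a)}{\Gamma(x)} \le C_a x^a$. -/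
open Real

lemma gamma_core (a : ℝ) (ha0 : 0 ≤ a) (ha1 : a ≤ 1) (x : ℝ) (hx : 1 ≤ x) :
    x ^ a / 2 ≤ Real.Gamma (x + a) / Real.Gamma x ∧
      Real.Gamma (x + a) / Real.Gamma x ≤ x ^ a := by
  have hx0 : (0 : ℝ) < x := lt_of_lt_of_le one_pos hx
  have hxa0 : (0 : ℝ) < x + a := by linarith
  have hGx : 0 < Real.Gamma x := Real.Gamma_pos_of_pos hx0
  have hGxa : 0 < Real.Gamma (x + a) := Real.Gamma_pos_of_pos hxa0
  have hlog1 : Real.log (Real.Gamma (x + 1)) = Real.log x + Real.log (Real.Gamma x) := by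
    rw [show x + 1 = x + 1 from rfl, Real.Gamma_add_one hx0.ne',
      Real.log_mul hx0.ne' hGx.ne']
  have hlog2 : Real.log (Real.Gamma (x + a + 1)) = Real.log (x + a) + Real.log (Real.Gamma (x + a)) := by
    rw [Real.Gamma_add_one hxa0.ne', Real.log_mul hxa0.ne' hGxa.ne']
  -- upper bound: log Γ(x+a) ≤ log Γ x + a log x
  have hup : Real.log (Real.Gamma (x + a)) ≤ Real.log (Real.Gamma x) + a * Real.log x := by
    have h := Real.convexOn_log_Gamma.2 (Set.mem_Ioi.2 hx0)
      (Set.mem_Ioi.2 (by linarith : (0:ℝ) < x + 1)) (by linarith : (0:ℝ) ≤ 1 - a) ha0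
      (by ring)
    simp only [smul_eq_mul, Function.comp_apply] at h
    have he : (1 - a) * x + a * (x + 1) = x + a := by ring
    rw [he, hlog1] at h
    nlinarith [h]
  -- lower bound: log Γ(x+1) ≤ log Γ(x+a) + (1-a) log(x+a)
  have hlo : Real.log x + Real.log (Real.Gamma x) ≤
      Real.log (Real.Gamma (x + a)) + (1 - a) * Real.log (x + a) := by
    have h := Real.convexOn_log_Gamma.2 (Set.mem_Ioi.2 hxa0)
      (Set.mem_Ioi.2 (by linarith : (0:ℝ) < x + a + 1)) ha0 (by linarith : (0:ℝ) ≤ 1 - a)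
      (by ring)
    simp only [smul_eq_mul, Function.comp_apply] at h
    have he : a * (x + a) + (1 - a) * (x + a + 1) = x + 1 := by ring
    rw [he, hlog1, hlog2] at h
    nlinarith [h]
  constructor
  · -- Γ(x+a)/Γ x ≥ x * (x+a)^(a-1) ≥ x^a / 2
    have key : x * (x + a) ^ (a - 1) ≤ Real.Gamma (x + a) / Real.Gamma x := by
      rw [← Real.exp_log (show (0:ℝ) < x * (x+a)^(a-1) by positivity),
        ← Real.exp_log (show (0:ℝ) < Real.Gamma (x+a) / Real.Gamma x by positivity)]
      apply Real.exp_le_exp.2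
      rw [Real.log_mul hx0.ne' (by positivity), Real.log_rpow hxa0,
        Real.log_div hGxa.ne' hGx.ne']
      nlinarith [hlo]
    refine le_trans ?_ key
    have h3 : x ^ a * (x + a) ^ (1 - a) ≤ 2 * x := by
      have hb : x + a ≤ 2 * x := by linarith
      have t1 : (x + a) ^ (1 - a) ≤ (2 * x) ^ (1 - a) :=
        Real.rpow_le_rpow hxa0.le hb (by linarith)
      have t2 : (2 * x) ^ (1 - a) = 2 ^ (1 - a) * x ^ (1 - a) :=
        Real.mul_rpow (by norm_num) hx0.le
      have t3 : x ^ a * x ^ (1 - a) = x := by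
        rw [← Real.rpow_add hx0]; norm_num
      have t4 : (2 : ℝ) ^ (1 - a) ≤ 2 := by
        have := Real.rpow_le_rpow_of_exponent_le (by norm_num : (1:ℝ) ≤ 2)
          (by linarith : 1 - a ≤ 1)
        simpa using this
      calc x ^ a * (x + a) ^ (1 - a) ≤ x ^ a * ((2:ℝ) ^ (1 - a) * x ^ (1 - a)) := by
            rw [← t2]; exact mul_le_mul_of_nonneg_left t1 (by positivity)
        _ = (2:ℝ) ^ (1 - a) * (x ^ a * x ^ (1 - a)) := by ring
        _ = (2:ℝ) ^ (1 - a) * x := by rw [t3]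
        _ ≤ 2 * x := mul_le_mul_of_nonneg_right t4 hx0.le
    rw [show a - 1 = -(1 - a) by ring, Real.rpow_neg hxa0.le,
      ← div_eq_mul_inv, div_le_div_iff₀ (by norm_num) (by positivity)]
    linarith [h3]
  · rw [div_le_iff₀ hGx]
    rw [← Real.exp_log hGxa, ← Real.exp_log (show (0:ℝ) < x ^ a * Real.Gamma x by positivity)]
    apply Real.exp_le_exp.2
    rw [Real.log_mul (by positivity) hGx.ne', Real.log_rpow hx0]
    linarith [hup]
lemma gamma_pos_case : ∀ n : ℕ, ∀ a : ℝ, 0 ≤ a → a ≤ n →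
    ∃ C : ℝ, 1 < C ∧ ∀ x : ℝ, 1 ≤ x →
      C⁻¹ * x ^ a ≤ Real.Gamma (x + a) / Real.Gamma x ∧
        Real.Gamma (x + a) / Real.Gamma x ≤ C * x ^ a := by
  intro n
  induction n with
  | zero =>
    intro a ha0 han
    have ha : a = 0 := le_antisymm (by exact_mod_cast han) ha0
    refine ⟨2, one_lt_two, fun x hx => ?_⟩
    have h := gamma_core a ha0 (by simp [ha]) x hx
    constructor
    · calc (2:ℝ)⁻¹ * x ^ a = x ^ a / 2 := by ring
        _ ≤ _ := h.1
    · exact h.2.trans (by nlinarith [Real.rpow_pos_of_pos (lt_of_lt_of_le one_pos hx) a])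
  | succ n ih =>
    intro a ha0 han
    by_cases h1 : a ≤ 1
    · refine ⟨2, one_lt_two, fun x hx => ?_⟩
      have h := gamma_core a ha0 h1 x hx
      constructor
      · calc (2:ℝ)⁻¹ * x ^ a = x ^ a / 2 := by ring
          _ ≤ _ := h.1
      · exact h.2.trans (by nlinarith [Real.rpow_pos_of_pos (lt_of_lt_of_le one_pos hx) a])
    · push_neg at h1
      obtain ⟨C, hC, hbound⟩ := ih (a - 1) (by linarith) (by push_cast at han ⊢; linarith)
      refine ⟨a * C, by nlinarith, fun x hx => ?_⟩
      have hx0 : (0:ℝ) < x := lt_of_lt_of_le one_pos hx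
      have hxa1 : (0:ℝ) < x + (a - 1) := by linarith
      have hGx : 0 < Real.Gamma x := Real.Gamma_pos_of_pos hx0
      have hGxa1 : 0 < Real.Gamma (x + (a - 1)) := Real.Gamma_pos_of_pos hxa1
      obtain ⟨hlo, hup⟩ := hbound x hx
      have hrec : Real.Gamma (x + a) = (x + (a - 1)) * Real.Gamma (x + (a - 1)) := by
        rw [show x + a = (x + (a - 1)) + 1 by ring, Real.Gamma_add_one hxa1.ne']
      have hsplit : Real.Gamma (x + a) / Real.Gamma x
          = (x + (a - 1)) * (Real.Gamma (x + (a - 1)) / Real.Gamma x) := by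
        rw [hrec]; ring
      have hpow : x ^ a = x * x ^ (a - 1) := by
        have h := Real.rpow_add hx0 1 (a - 1)
        rw [Real.rpow_one, show (1:ℝ) + (a - 1) = a by ring] at h
        exact h
      have hp1 : (0:ℝ) < x ^ (a - 1) := Real.rpow_pos_of_pos hx0 _
      have hr' : 0 < Real.Gamma (x + (a - 1)) / Real.Gamma x := by positivity
      rw [hsplit, hpow]
      constructor
      · have hfac : x ≤ x + (a - 1) := by linarith
        have hCinv : (a * C)⁻¹ ≤ C⁻¹ := by
          apply inv_anti₀ (by linarith)
          nlinarith
        calc (a * C)⁻¹ * (x * x ^ (a - 1)) ≤ C⁻¹ * (x * x ^ (a - 1)) := by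
              apply mul_le_mul_of_nonneg_right hCinv; positivity
          _ = x * (C⁻¹ * x ^ (a - 1)) := by ring
          _ ≤ (x + (a - 1)) * (Real.Gamma (x + (a - 1)) / Real.Gamma x) := by
              apply mul_le_mul hfac hlo (by positivity) (by linarith)
      · have hfac : x + (a - 1) ≤ a * x := by nlinarith
        calc (x + (a - 1)) * (Real.Gamma (x + (a - 1)) / Real.Gamma x)
            ≤ (a * x) * (C * x ^ (a - 1)) := by
              apply mul_le_mul hfac hup hr'.le (by positivity)
          _ = a * C * (x * x ^ (a - 1)) := by ring

theorem gamma_ratio_asymptotic (a : ℝ) :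
    ∃ C : ℝ, 1 < C ∧ ∀ x : ℝ, 1 ≤ x → 1 ≤ x + a →
      C⁻¹ * x ^ a ≤ Real.Gamma (x + a) / Real.Gamma x ∧
        Real.Gamma (x + a) / Real.Gamma x ≤ C * x ^ a := by
  rcases le_or_gt 0 a with ha | ha
  · obtain ⟨C, hC, hbound⟩ := gamma_pos_case ⌈a⌉₊ a ha (Nat.le_ceil a)
    exact ⟨C, hC, fun x hx _ => hbound x hx⟩
  · -- a < 0 : set b = -a, use positive case at y = x + a
    set b : ℝ := -a with hb
    have hb0 : 0 < b := by simp [hb]; linarith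
    obtain ⟨C, hC, hbound⟩ := gamma_pos_case ⌈b⌉₊ b hb0.le (Nat.le_ceil b)
    have hK1 : (1:ℝ) < (1 + b) ^ b := by
      apply Real.one_lt_rpow_iff_of_pos (by linarith) |>.2
      left; exact ⟨by linarith, hb0⟩
    refine ⟨C * (1 + b) ^ b, by nlinarith, fun x hx hxa => ?_⟩
    have hy : (1:ℝ) ≤ x + a := hxa
    have hy0 : (0:ℝ) < x + a := by linarith
    have hx0 : (0:ℝ) < x := lt_of_lt_of_le one_pos hx
    have hGx : 0 < Real.Gamma x := Real.Gamma_pos_of_pos hx0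
    have hGy : 0 < Real.Gamma (x + a) := Real.Gamma_pos_of_pos hy0
    obtain ⟨hlo, hup⟩ := hbound (x + a) hy
    rw [show x + a + b = x by simp [hb]] at hlo hup
    -- hlo : C⁻¹ * (x+a)^b ≤ Γ x / Γ (x+a),  hup : Γ x / Γ(x+a) ≤ C * (x+a)^b
    have hyb : (0:ℝ) < (x + a) ^ b := Real.rpow_pos_of_pos hy0 _
    have hratio : Real.Gamma (x + a) / Real.Gamma x = (Real.Gamma x / Real.Gamma (x + a))⁻¹ := by
      rw [inv_div]
    have hya : (x + a) ^ a = ((x + a) ^ b)⁻¹ := by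
      rw [← Real.rpow_neg hy0.le]; simp [hb]
    -- comparisons of (x+a)^a and x^a
    have hcmp1 : x ^ a ≤ (x + a) ^ a :=
      Real.rpow_le_rpow_of_nonpos hy0 (by linarith) ha.le
    have hcmp2 : (x + a) ^ a ≤ (1 + b) ^ b * x ^ a := by
      have hxle : x ≤ (1 + b) * (x + a) := by nlinarith
      have h1 : x ^ a ≥ ((1 + b) * (x + a)) ^ a :=
        Real.rpow_le_rpow_of_nonpos hx0 hxle ha.le
      have h2 : ((1 + b) * (x + a)) ^ a = (1 + b) ^ a * (x + a) ^ a :=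
        Real.mul_rpow (by linarith) hy0.le
      have h3 : ((1 + b) ^ a)⁻¹ = (1 + b) ^ b := by
        rw [← Real.rpow_neg (by linarith)]
      have hp : (0:ℝ) < (1 + b) ^ a := Real.rpow_pos_of_pos (by linarith) _
      rw [h2] at h1
      calc (x + a) ^ a = ((1 + b) ^ a)⁻¹ * ((1 + b) ^ a * (x + a) ^ a) := by
            field_simp
        _ ≤ ((1 + b) ^ a)⁻¹ * x ^ a := by
            apply mul_le_mul_of_nonneg_left h1 (by positivity)
        _ = (1 + b) ^ b * x ^ a := by rw [h3]
    have hK0 : (0:ℝ) < (1 + b) ^ b := by positivity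
    have hxapos : (0:ℝ) < x ^ a := Real.rpow_pos_of_pos hx0 _
    rw [hratio]
    have e1 : (C * (x + a) ^ b)⁻¹ = C⁻¹ * (x + a) ^ a := by rw [mul_inv, hya]
    have e2 : (C⁻¹ * (x + a) ^ b)⁻¹ = C * (x + a) ^ a := by rw [mul_inv, inv_inv, hya]
    have hC0 : (0:ℝ) < C := by linarith
    have hrp : (0:ℝ) < Real.Gamma x / Real.Gamma (x + a) := by positivity
    constructor
    · calc (C * (1 + b) ^ b)⁻¹ * x ^ a ≤ C⁻¹ * x ^ a := by
            apply mul_le_mul_of_nonneg_right _ hxapos.le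
            exact inv_anti₀ hC0 (le_mul_of_one_le_right hC0.le hK1.le)
        _ ≤ C⁻¹ * (x + a) ^ a := mul_le_mul_of_nonneg_left hcmp1 (by positivity)
        _ = (C * (x + a) ^ b)⁻¹ := e1.symm
        _ ≤ (Real.Gamma x / Real.Gamma (x + a))⁻¹ := inv_anti₀ hrp hup
    · calc (Real.Gamma x / Real.Gamma (x + a))⁻¹
          ≤ (C⁻¹ * (x + a) ^ b)⁻¹ := inv_anti₀ (by positivity) hlo
        _ = C * (x + a) ^ a := e2
        _ ≤ C * ((1 + b) ^ b * x ^ a) := mul_le_mul_of_nonneg_left hcmp2 hC0.le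
        _ = C * (1 + b) ^ b * x ^ a := by ring
end

section
/- Let $d\ge 3$ and $\mu>-1$. For $x=r\xi$, $y=s\varrho$ in $\mathbb{B}^d$ with $r=\|x\|$, $s=\|y\|$, $\xi,\varrho\in\mathbb{S}^{d-1}$, the reproducing kernel $\mathbb{K}_n(x,y)=\sum_{m=0}^n\sum_{j\le m/2}\sum_\nu P_{j,\nu}^m(x)P_{j,\nu}^m(y)/H_{j,\nu}^m$ of the classical ball polynomials satisfies $\mathbb{K}_n(x,y) = \frac{1}{c_\mu^d}\sum_{k=0}^n K^{(\mu,k+\delta)}_{\lfloor (n-k)/2\rfloor}(2r^2-1, 2s^2-1)\,(2rs)^k\,\frac{k+\delta}{\delta}\,C_k^\delta(\langle\xi,\varrho\rangle)$, where $\delta=(d-2)/2$ and $C_k^\delta$ are Gegenbauer polynomials. -/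
open MeasureTheory Polynomial
open scoped RealInnerProductSpace

/-- Dimension `a_m^d` of the space of spherical harmonics of degree `m` in `d` variables. -/
def sphDim (d m : ℕ) : ℕ := (m + d - 1).choose (d - 1) - (m + d - 3).choose (d - 1)

/-- The Laplace operator on multivariate polynomials. -/
noncomputable def mvLaplacian {d : ℕ} (P : MvPolynomial (Fin d) ℝ) : MvPolynomial (Fin d) ℝ :=
  ∑ i : Fin d, MvPolynomial.pderiv i (MvPolynomial.pderiv i P)

/-- Surface area of the unit sphere `𝕊^{d-1}`. -/
noncomputable def sphereArea (d : ℕ) : ℝ := 2 * Real.pi ^ ((d : ℝ) / 2) / Real.Gamma (d / 2)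

/-- Normalization constant `ω_μ` for the ball weight. -/
noncomputable def omegaMu (d : ℕ) (μ : ℝ) : ℝ :=
  Real.pi ^ ((d : ℝ) / 2) * Real.Gamma (μ + 1) / Real.Gamma (μ + 1 + d / 2)

/-- The constant `c_μ^d = 2^{-μ-d/2-1} σ_{d-1}/ω_μ`. -/
noncomputable def cMuD (d : ℕ) (μ : ℝ) : ℝ :=
  2 ^ (-μ - (d : ℝ) / 2 - 1) * sphereArea d / omegaMu d μ

/-! Group the terms of `𝕂_n(x, y)` by the degree `k = m - 2j` of the spherical
harmonic. Homogeneity gives `Y(rξ) = r^k Y(ξ)`, the addition formula collapses the sum over `ν` to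
`(k+δ)/δ · C_k^δ(⟪ξ, ρ⟫)`, and the remaining sum over `j` is the truncated Jacobi kernel
`K^{(μ, k+δ)}_{⌊(n-k)/2⌋}`. -/

namespace MvPolynomial

variable {σ R : Type*} [CommSemiring R]

theorem IsHomogeneous.eval_smul {φ : MvPolynomial σ R} {n : ℕ} (hφ : φ.IsHomogeneous n)
    (c : R) (x : σ → R) : eval (c • x) φ = c ^ n * eval x φ := by
  rw [eval_eq, eval_eq, Finset.mul_sum]
  refine Finset.sum_congr rfl fun e he => ?_
  have hdeg : ∑ i ∈ e.support, e i = n := by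
    simpa only [Finsupp.weight_apply, Finsupp.sum, Pi.one_apply, smul_eq_mul, mul_one] using
      hφ (mem_support_iff.mp he)
  simp only [Pi.smul_apply, smul_eq_mul, mul_pow, Finset.prod_mul_distrib,
    Finset.prod_pow_eq_pow_sum, hdeg]
  ring

theorem sum_eval_smul_mul_eval_smul {ι : Type*} (S : Finset ι) (Y : ι → MvPolynomial σ R)
    {k : ℕ} (hY : ∀ ν ∈ S, (Y ν).IsHomogeneous k) (r s : R) (x y : σ → R) :
    ∑ ν ∈ S, eval (r • x) (Y ν) * eval (s • y) (Y ν) =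
      (r * s) ^ k * ∑ ν ∈ S, eval x (Y ν) * eval y (Y ν) := by
  rw [Finset.mul_sum]
  refine Finset.sum_congr rfl fun ν hν => ?_
  rw [(hY ν hν).eval_smul, (hY ν hν).eval_smul]
  ring

end MvPolynomial

theorem Finset.sum_range_sum_range_half_sub_two_mul {M : Type*} [AddCommMonoid M] (n : ℕ)
    (f : ℕ → ℕ → M) :
    ∑ m ∈ range (n + 1), ∑ j ∈ range (m / 2 + 1), f (m - 2 * j) j =
      ∑ k ∈ range (n + 1), ∑ j ∈ range ((n - k) / 2 + 1), f k j := by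
  rw [sum_sigma', sum_sigma']
  refine sum_nbij' (fun p => ⟨p.1 - 2 * p.2, p.2⟩) (fun p => ⟨p.1 + 2 * p.2, p.2⟩)
    ?_ ?_ ?_ ?_ fun p _ => rfl
  all_goals
    rintro ⟨a, b⟩ hab
    simp only [Finset.mem_sigma, mem_range, Sigma.mk.injEq, heq_eq_eq, and_true] at hab ⊢
    omega

theorem ball_kernel_representation_general
    (d : ℕ) (μ : ℝ)
    -- `δ = (d-2)/2`
    (δ : ℝ)
    -- an orthonormal basis of spherical harmonics of each degree
    (Y : ℕ → ℕ → MvPolynomial (Fin d) ℝ)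
    (hYhom : ∀ m ν, ν < sphDim d m → (Y m ν).IsHomogeneous m)
    -- Jacobi polynomials `P_j^{(μ,β)}`
    (J : ℝ → ℕ → Polynomial ℝ)
    -- the squared `L²` norms `h_j^{(μ,β)}`
    (h : ℝ → ℕ → ℝ)
    -- Gegenbauer polynomials `C_k^δ`
    (G : ℕ → Polynomial ℝ)
    -- the addition formula for spherical harmonics
    (hadd : ∀ k : ℕ, ∀ ξ ∈ Metric.sphere (0 : EuclideanSpace ℝ (Fin d)) 1,
      ∀ ρ ∈ Metric.sphere (0 : EuclideanSpace ℝ (Fin d)) 1,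
        ∑ ν ∈ Finset.range (sphDim d k),
            MvPolynomial.eval (fun i => ξ i) (Y k ν) * MvPolynomial.eval (fun i => ρ i) (Y k ν) =
          (((k : ℝ) + δ) / δ) * (G k).eval ⟪ξ, ρ⟫)
    (n : ℕ) (r s : ℝ)
    (ξ ρ : EuclideanSpace ℝ (Fin d))
    (hξ : ξ ∈ Metric.sphere (0 : EuclideanSpace ℝ (Fin d)) 1)
    (hρ : ρ ∈ Metric.sphere (0 : EuclideanSpace ℝ (Fin d)) 1) :
    -- `𝕂_n(x,y)` for `x = rξ`, `y = sρ`
    (∑ m ∈ Finset.range (n + 1), ∑ j ∈ Finset.range (m / 2 + 1),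
      ∑ ν ∈ Finset.range (sphDim d (m - 2 * j)),
        ((J (((m - 2 * j : ℕ) : ℝ) + δ) j).eval (2 * ‖r • ξ‖ ^ 2 - 1) *
            MvPolynomial.eval (fun i => (r • ξ) i) (Y (m - 2 * j) ν)) *
        ((J (((m - 2 * j : ℕ) : ℝ) + δ) j).eval (2 * ‖s • ρ‖ ^ 2 - 1) *
            MvPolynomial.eval (fun i => (s • ρ) i) (Y (m - 2 * j) ν)) /
        (cMuD d μ / 2 ^ (m - 2 * j) * h (((m - 2 * j : ℕ) : ℝ) + δ) j)) =
    (cMuD d μ)⁻¹ *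
      ∑ k ∈ Finset.range (n + 1),
        (∑ j ∈ Finset.range ((n - k) / 2 + 1),
            (J ((k : ℝ) + δ) j).eval (2 * r ^ 2 - 1) * (J ((k : ℝ) + δ) j).eval (2 * s ^ 2 - 1) /
              h ((k : ℝ) + δ) j) *
          (2 * r * s) ^ k * (((k : ℝ) + δ) / δ) * (G k).eval ⟪ξ, ρ⟫ := by
  have hξ1 : ‖ξ‖ = 1 := mem_sphere_zero_iff_norm.mp hξ
  have hρ1 : ‖ρ‖ = 1 := mem_sphere_zero_iff_norm.mp hρ
  have norm_smul_sq (t : ℝ) {x : EuclideanSpace ℝ (Fin d)} (hx : ‖x‖ = 1) :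
      ‖t • x‖ ^ 2 = t ^ 2 := by
    rw [norm_smul, hx, mul_one, Real.norm_eq_abs, sq_abs]
  have coord_smul (t : ℝ) (x : EuclideanSpace ℝ (Fin d)) :
      (fun i => (t • x) i) = t • fun i => x i := rfl
  set g : ℕ → ℕ → ℝ := fun k j => (cMuD d μ)⁻¹ *
    ((J ((k : ℝ) + δ) j).eval (2 * r ^ 2 - 1) * (J ((k : ℝ) + δ) j).eval (2 * s ^ 2 - 1) /
      h ((k : ℝ) + δ) j * (2 * r * s) ^ k * (((k : ℝ) + δ) / δ) * (G k).eval ⟪ξ, ρ⟫) with hg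
  have degree_sum (k j : ℕ) :
      ∑ ν ∈ Finset.range (sphDim d k),
        ((J ((k : ℝ) + δ) j).eval (2 * ‖r • ξ‖ ^ 2 - 1) *
            MvPolynomial.eval (fun i => (r • ξ) i) (Y k ν)) *
        ((J ((k : ℝ) + δ) j).eval (2 * ‖s • ρ‖ ^ 2 - 1) *
            MvPolynomial.eval (fun i => (s • ρ) i) (Y k ν)) /
        (cMuD d μ / 2 ^ k * h ((k : ℝ) + δ) j) = g k j := by
    have addition := MvPolynomial.sum_eval_smul_mul_eval_smul (Finset.range (sphDim d k)) (Y k)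
      (fun ν hν => hYhom k ν (Finset.mem_range.mp hν)) r s (fun i => ξ i) (fun i => ρ i)
    rw [hadd k ξ hξ ρ hρ] at addition
    rw [norm_smul_sq r hξ1, norm_smul_sq s hρ1, coord_smul, coord_smul, ← Finset.sum_div,
      div_mul_eq_mul_div, div_div_eq_mul_div]
    simp only [mul_mul_mul_comm _ (MvPolynomial.eval _ _), ← Finset.mul_sum, addition, hg]
    ring
  calc _ = ∑ m ∈ Finset.range (n + 1), ∑ j ∈ Finset.range (m / 2 + 1), g (m - 2 * j) j :=
        Finset.sum_congr rfl fun m _ => Finset.sum_congr rfl fun j _ => degree_sum (m - 2 * j) j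
    _ = ∑ k ∈ Finset.range (n + 1), ∑ j ∈ Finset.range ((n - k) / 2 + 1), g k j :=
        Finset.sum_range_sum_range_half_sub_two_mul n g
    _ = _ := by
        simp only [hg, Finset.mul_sum, Finset.sum_mul]

theorem ball_kernel_representation
    (d : ℕ) (hd : 3 ≤ d) (μ : ℝ) (hμ : -1 < μ)
    -- `δ = (d-2)/2`
    (δ : ℝ) (hδ : δ = ((d : ℝ) - 2) / 2)
    -- an orthonormal basis of spherical harmonics of each degree
    (Y : ℕ → ℕ → MvPolynomial (Fin d) ℝ)
    (hYhom : ∀ m ν, ν < sphDim d m → (Y m ν).IsHomogeneous m)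
    (hYharm : ∀ m ν, ν < sphDim d m → mvLaplacian (Y m ν) = 0)
    (hYortho : ∀ m ν m' ν', ν < sphDim d m → ν' < sphDim d m' →
      (sphereArea d)⁻¹ *
        ∫ ξ in Metric.sphere (0 : EuclideanSpace ℝ (Fin d)) 1,
          MvPolynomial.eval (fun i => ξ i) (Y m ν) * MvPolynomial.eval (fun i => ξ i) (Y m' ν')
          ∂(μH[(d : ℝ) - 1]) = if m = m' ∧ ν = ν' then 1 else 0)
    -- Jacobi polynomials `P_j^{(μ,β)}`
    (J : ℝ → ℕ → Polynomial ℝ)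
    (hJdeg : ∀ β j, (J β j).natDegree = j)
    (hJorth : ∀ β, -1 < β → ∀ j j', j ≠ j' →
      ∫ t in Set.Icc (-1 : ℝ) 1,
        (J β j).eval t * (J β j').eval t * ((1 - t) ^ μ * (1 + t) ^ β) = 0)
    -- the squared `L²` norms `h_j^{(μ,β)}`
    (h : ℝ → ℕ → ℝ)
    (hh : ∀ β j, h β j =
      ∫ t in Set.Icc (-1 : ℝ) 1, ((J β j).eval t) ^ 2 * ((1 - t) ^ μ * (1 + t) ^ β))
    -- Gegenbauer polynomials `C_k^δ`
    (G : ℕ → Polynomial ℝ)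
    (hGdeg : ∀ k, (G k).natDegree = k)
    (hGorth : ∀ k k', k ≠ k' →
      ∫ t in Set.Icc (-1 : ℝ) 1,
        (G k).eval t * (G k').eval t * (1 - t ^ 2) ^ (δ - 1 / 2) = 0)
    (hG1 : ∀ k, (G k).eval 1 = (∏ i ∈ Finset.range k, (2 * δ + i)) / k.factorial)
    -- the addition formula for spherical harmonics
    (hadd : ∀ k : ℕ, ∀ ξ ∈ Metric.sphere (0 : EuclideanSpace ℝ (Fin d)) 1,
      ∀ ρ ∈ Metric.sphere (0 : EuclideanSpace ℝ (Fin d)) 1,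
        ∑ ν ∈ Finset.range (sphDim d k),
            MvPolynomial.eval (fun i => ξ i) (Y k ν) * MvPolynomial.eval (fun i => ρ i) (Y k ν) =
          (((k : ℝ) + δ) / δ) * (G k).eval ⟪ξ, ρ⟫)
    (n : ℕ) (r s : ℝ) (hr : 0 ≤ r) (hr1 : r ≤ 1) (hs : 0 ≤ s) (hs1 : s ≤ 1)
    (ξ ρ : EuclideanSpace ℝ (Fin d))
    (hξ : ξ ∈ Metric.sphere (0 : EuclideanSpace ℝ (Fin d)) 1)
    (hρ : ρ ∈ Metric.sphere (0 : EuclideanSpace ℝ (Fin d)) 1) :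
    -- `𝕂_n(x,y)` for `x = rξ`, `y = sρ`
    (∑ m ∈ Finset.range (n + 1), ∑ j ∈ Finset.range (m / 2 + 1),
      ∑ ν ∈ Finset.range (sphDim d (m - 2 * j)),
        ((J (((m - 2 * j : ℕ) : ℝ) + δ) j).eval (2 * ‖r • ξ‖ ^ 2 - 1) *
            MvPolynomial.eval (fun i => (r • ξ) i) (Y (m - 2 * j) ν)) *
        ((J (((m - 2 * j : ℕ) : ℝ) + δ) j).eval (2 * ‖s • ρ‖ ^ 2 - 1) *
            MvPolynomial.eval (fun i => (s • ρ) i) (Y (m - 2 * j) ν)) /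
        (cMuD d μ / 2 ^ (m - 2 * j) * h (((m - 2 * j : ℕ) : ℝ) + δ) j)) =
    (cMuD d μ)⁻¹ *
      ∑ k ∈ Finset.range (n + 1),
        (∑ j ∈ Finset.range ((n - k) / 2 + 1),
            (J ((k : ℝ) + δ) j).eval (2 * r ^ 2 - 1) * (J ((k : ℝ) + δ) j).eval (2 * s ^ 2 - 1) /
              h ((k : ℝ) + δ) j) *
          (2 * r * s) ^ k * (((k : ℝ) + δ) / δ) * (G k).eval ⟪ξ, ρ⟫ :=
  ball_kernel_representation_general d μ δ Y hYhom J h G hadd n r s ξ ρ hξ hρ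
end
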